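/- arXiv:2310.03437 — 6 statements merged into one kernel-verified Lean document; each statement's English description precedes it below -/
import Mathlib

section
/- Let L ∈ GL(m, ℝ) have all eigenvalues of modulus strictly less than 1, and define L_ε(C) := {L(x) + y : x ∈ C, ‖y‖ ≤ ε} for nonempty compact C ⊆ ℝ^m. Then L_ε has a unique fixed point A in the space of nonempty compact subsets of ℝ^m, and L_ε^i(C) → A in the Hausdorff metric for every nonempty compact C. -/
noncomputable section

/-- All (complex) eigenvalues of the real matrix `M` have modulus less than 1. -/
def specLt1 {m : ℕ} (M : Matrix (Fin m) (Fin m) ℝ) : Prop :=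
  ∀ μ ∈ spectrum ℂ (M.map Complex.ofReal), ‖μ‖ < 1

/-- The set-valued map `L_ε(C) = {L(x) + y : x ∈ C, ‖y‖ ≤ ε}`. -/
def Leps {m : ℕ} (M : Matrix (Fin m) (Fin m) ℝ) (ε : ℝ)
    (C : Set (EuclideanSpace ℝ (Fin m))) : Set (EuclideanSpace ℝ (Fin m)) :=
  {z | ∃ x ∈ C, ∃ y : EuclideanSpace ℝ (Fin m), ‖y‖ ≤ ε ∧ z = Matrix.toEuclideanLin M x + y}

/-!
The spectral condition and Gelfand's formula make the powers of the complexified matrix tend to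
zero, hence so do the real powers `M ^ n`, and some power `L ^ n` has operator norm `< 1`.
Iterating, `L_ε^[n] C = L ^ n '' C + Bₙ` for a set `Bₙ` independent of `C`; since a
`K`-Lipschitz image multiplies Hausdorff distances by at most `K` and adding a common set does not
increase them, `L_ε^[n]` is a contraction of the complete space of nonempty compact sets. Its
Banach fixed point is the unique fixed point of `L_ε`, and it attracts every orbit of `L_ε`
because it attracts each subsequence along a residue class modulo `n`.
-/

open Filter Topology Metric Set Pointwise TopologicalSpace Function

theorem Filter.tendsto_of_forall_tendsto_mul_add {α : Type*} {u : ℕ → α} {l : Filter α} {n : ℕ}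
    (hn : 0 < n) (h : ∀ r < n, Tendsto (fun k => u (n * k + r)) atTop l) :
    Tendsto u atTop l := by
  refine fun U hU => mem_map.2 ?_
  have hall : ∀ᶠ k in atTop, ∀ r ∈ Iio n, u (n * k + r) ∈ U :=
    (finite_Iio n).eventually_all.2 fun r hr => h r hr hU
  filter_upwards [(Nat.tendsto_div_const_atTop hn.ne').eventually hall] with i hi
  show u i ∈ U
  simpa only [Nat.div_add_mod] using hi (i % n) (Nat.mod_lt i hn)

theorem ContractingWith.tendsto_iterate_fixedPoint_iterate {α : Type*} [MetricSpace α]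
    [Nonempty α] [CompleteSpace α] {f : α → α} {K : NNReal} {n : ℕ} (hn : 0 < n)
    (hf : ContractingWith K f^[n]) (x : α) :
    Tendsto (fun i => f^[i] x) atTop (𝓝 (hf.fixedPoint f^[n])) :=
  tendsto_of_forall_tendsto_mul_add hn fun r _ => by
    simpa only [iterate_add_apply, iterate_mul] using hf.tendsto_iterate_fixedPoint (f^[r] x)

section Lipschitz

variable {α β : Type*} [PseudoEMetricSpace α] [PseudoEMetricSpace β] {f : α → β} {K : NNReal}

theorem LipschitzWith.infEDist_image_le (hf : LipschitzWith K f) {t : Set α} (ht : t.Nonempty)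
    (x : α) : infEDist (f x) (f '' t) ≤ K * infEDist x t := by
  have : Nonempty t := ht.to_subtype
  calc infEDist (f x) (f '' t) ≤ ⨅ y : t, edist (f x) (f y) :=
        le_iInf fun y => infEDist_le_edist_of_mem (mem_image_of_mem f y.2)
    _ ≤ ⨅ y : t, K * edist x y := iInf_mono fun y => hf x y
    _ = K * infEDist x t := by
      rw [infEDist, iInf_subtype', ENNReal.mul_iInf fun h => absurd h ENNReal.coe_ne_top]

theorem LipschitzWith.hausdorffEDist_image_le (hf : LipschitzWith K f) {s t : Set α}
    (hs : s.Nonempty) (ht : t.Nonempty) :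
    hausdorffEDist (f '' s) (f '' t) ≤ K * hausdorffEDist s t := by
  have key : ∀ {s t : Set α}, t.Nonempty → ∀ y ∈ f '' s,
      infEDist y (f '' t) ≤ K * hausdorffEDist s t := by
    rintro s t ht _ ⟨x, hx, rfl⟩
    exact (hf.infEDist_image_le ht x).trans (by gcongr; exact infEDist_le_hausdorffEDist_of_mem hx)
  exact hausdorffEDist_le_of_infEDist (key ht) (hausdorffEDist_comm (s := s) ▸ key hs)

end Lipschitz

theorem hausdorffEDist_add_right_le {G : Type*} [PseudoEMetricSpace G] [AddCommGroup G]
    [IsIsometricVAdd G G] (s t B : Set G) :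
    hausdorffEDist (s + B) (t + B) ≤ hausdorffEDist s t := by
  rw [add_comm s, add_comm t, ← vadd_eq_add, ← vadd_eq_add, ← iUnion_vadd_set, ← iUnion_vadd_set]
  refine hausdorffEDist_iUnion_le.trans <| iSup_le fun b =>
    hausdorffEDist_iUnion_le.trans <| iSup_le fun _ => ?_
  rw [← image_vadd, ← image_vadd, hausdorffEDist_image (isometry_vadd G b)]

theorem exists_iterate_image_add_eq {E F : Type*} [AddMonoid E] [FunLike F E E] [AddHomClass F E E]
    (f : F) (D : Set E) (i : ℕ) :
    ∃ B : Set E, ∀ C, (fun C => f '' C + D)^[i] C = f^[i] '' C + B := by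
  induction i with
  | zero => exact ⟨0, fun C => by simp⟩
  | succ i ih =>
    obtain ⟨B, hB⟩ := ih
    refine ⟨f '' B + D, fun C => ?_⟩
    rw [iterate_succ_apply', hB, image_add, ← image_comp, ← iterate_succ', add_assoc]

namespace spectrum

theorem tendsto_pow_atTop_nhds_zero_of_forall_norm_lt_one {A : Type*} [NormedRing A]
    [NormedAlgebra ℂ A] [CompleteSpace A] {a : A} (ha : ∀ z ∈ spectrum ℂ a, ‖z‖ < 1) :
    Tendsto (fun n => a ^ n) atTop (𝓝 0) := by
  rcases subsingleton_or_nontrivial A with hA | hA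
  · simpa only [Subsingleton.elim _ (0 : A)] using tendsto_const_nhds
  have hρ : spectralRadius ℂ a < 1 :=
    spectralRadius_lt_of_forall_lt a fun z hz => by exact_mod_cast ha z hz
  obtain ⟨r, har, hr1⟩ := ENNReal.lt_iff_exists_nnreal_btwn.1 hρ
  have hbound : ∀ᶠ n : ℕ in atTop, ‖a ^ n‖ ≤ (r : ℝ) ^ n := by
    filter_upwards [(pow_nnnorm_pow_one_div_tendsto_nhds_spectralRadius a).eventually_lt_const har,
      eventually_gt_atTop 0] with n hn hn0
    rw [one_div, ENNReal.rpow_inv_lt_iff (by positivity), ENNReal.rpow_natCast] at hn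
    exact_mod_cast hn.le
  exact squeeze_zero_norm' hbound
    (tendsto_pow_atTop_nhds_zero_of_lt_one r.coe_nonneg (by exact_mod_cast hr1))

end spectrum

section L2OpNorm

open scoped Matrix.Norms.L2Operator

theorem specLt1.tendsto_pow {m : ℕ} {M : Matrix (Fin m) (Fin m) ℝ} (hM : specLt1 M) :
    Tendsto (fun n => M ^ n) atTop (𝓝 0) := by
  have hC := (continuous_id.matrix_map Complex.continuous_re).tendsto 0 |>.comp
    (spectrum.tendsto_pow_atTop_nhds_zero_of_forall_norm_lt_one hM)
  have hpow : ∀ n, (M.map Complex.ofReal) ^ n = (M ^ n).map Complex.ofReal :=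
    fun n => (M.map_pow Complex.ofRealHom n).symm
  simpa [Function.comp_def, hpow, Matrix.map_map] using hC

theorem specLt1.exists_norm_pow_lt_one {m : ℕ} {M : Matrix (Fin m) (Fin m) ℝ} (hM : specLt1 M) :
    ∃ n, 0 < n ∧ ‖Matrix.toEuclideanCLM (n := Fin m) (𝕜 := ℝ) M ^ n‖ < 1 := by
  have h := (tendsto_zero_iff_norm_tendsto_zero.1 hM.tendsto_pow).eventually_lt_const one_pos
  obtain ⟨n, hn, hn0⟩ := (h.and (eventually_gt_atTop 0)).exists
  exact ⟨n, hn0, by rwa [← map_pow, ← Matrix.cstar_norm_def]⟩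

end L2OpNorm

namespace TopologicalSpace.NonemptyCompacts

section ImageAdd

variable {E : Type*} [TopologicalSpace E] [AddMonoid E] [ContinuousAdd E]

def imageAdd (f : E → E) (hf : Continuous f) (D K : NonemptyCompacts E) : NonemptyCompacts E :=
  ⟨⟨f '' K + D, (K.isCompact.image hf).add D.isCompact⟩, (K.nonempty.image f).add D.nonempty⟩

theorem coe_iterate_imageAdd (f : E → E) (hf : Continuous f) (D K : NonemptyCompacts E) (i : ℕ) :
    ((imageAdd f hf D)^[i] K : Set E) = (fun C => f '' C + D)^[i] K := by
  induction i with
  | zero => rfl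
  | succ i ih => rw [iterate_succ_apply', iterate_succ_apply', ← ih]; rfl

end ImageAdd

theorem lipschitzWith_iterate_imageAdd {𝕜 E : Type*} [NontriviallyNormedField 𝕜]
    [NormedAddCommGroup E] [NormedSpace 𝕜 E] (T : E →L[𝕜] E) (D : NonemptyCompacts E) (n : ℕ) :
    LipschitzWith ‖T ^ n‖₊ (imageAdd T T.continuous D)^[n] := fun K K' => by
  obtain ⟨B, hB⟩ := exists_iterate_image_add_eq T (D : Set E) n
  change hausdorffEDist _ _ ≤ _ * hausdorffEDist (K : Set E) K'
  rw [coe_iterate_imageAdd, coe_iterate_imageAdd, hB, hB, ← FunLike.coe_pow_eq_iterate]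
  exact (hausdorffEDist_add_right_le _ _ B).trans
    ((T ^ n).lipschitz.hausdorffEDist_image_le K.nonempty K'.nonempty)

end TopologicalSpace.NonemptyCompacts

theorem Leps_eq_image_add_closedBall {m : ℕ} (M : Matrix (Fin m) (Fin m) ℝ) (ε : ℝ) :
    Leps M ε = fun C => Matrix.toEuclideanCLM (n := Fin m) (𝕜 := ℝ) M '' C + closedBall 0 ε := by
  ext C z
  simp [Leps, Set.mem_add, eq_comm, ← Matrix.coe_toEuclideanCLM_eq_toEuclideanLin]

theorem stmt2_general {m : ℕ} (M : Matrix (Fin m) (Fin m) ℝ)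
    (hspec : specLt1 M) (ε : ℝ) (hε : 0 < ε) :
    ∃ A : Set (EuclideanSpace ℝ (Fin m)), A.Nonempty ∧ IsCompact A ∧ Leps M ε A = A ∧
      (∀ A' : Set (EuclideanSpace ℝ (Fin m)),
        A'.Nonempty → IsCompact A' → Leps M ε A' = A' → A' = A) ∧
      (∀ C : Set (EuclideanSpace ℝ (Fin m)), C.Nonempty → IsCompact C →
        Filter.Tendsto (fun i => Metric.hausdorffDist ((Leps M ε)^[i] C) A)
          Filter.atTop (nhds 0)) := by
  set T := Matrix.toEuclideanCLM (n := Fin m) (𝕜 := ℝ) M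
  obtain ⟨n, hn, hTn⟩ := hspec.exists_norm_pow_lt_one
  let D : NonemptyCompacts (EuclideanSpace ℝ (Fin m)) :=
    ⟨⟨closedBall 0 ε, isCompact_closedBall 0 ε⟩, nonempty_closedBall.2 hε.le⟩
  let Φ := NonemptyCompacts.imageAdd T T.continuous D
  have hΦ : ∀ i K, ((Φ^[i] K : NonemptyCompacts _) : Set _) = (Leps M ε)^[i] K := fun i K => by
    rw [NonemptyCompacts.coe_iterate_imageAdd, Leps_eq_image_add_closedBall]; rfl
  have hc : ContractingWith ‖T ^ n‖₊ Φ^[n] :=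
    ⟨by exact_mod_cast hTn, NonemptyCompacts.lipschitzWith_iterate_imageAdd T D n⟩
  have hfix : ∀ K, Φ K = K ↔ Leps M ε K = K := fun K => by
    rw [← SetLike.coe_set_eq, ← iterate_one Φ, hΦ, iterate_one]
  set A := hc.fixedPoint Φ^[n]
  refine ⟨A, A.nonempty, A.isCompact, (hfix A).1 hc.isFixedPt_fixedPoint_iterate,
    fun A' hne hcpt hA' => ?_, fun C hne hcpt => ?_⟩
  · have hK := (hfix ⟨⟨A', hcpt⟩, hne⟩).2 hA'
    exact congrArg SetLike.coe (hc.fixedPoint_unique (IsFixedPt.iterate hK n))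
  · have h := tendsto_iff_dist_tendsto_zero.1
      (hc.tendsto_iterate_fixedPoint_iterate hn ⟨⟨C, hcpt⟩, hne⟩)
    simp only [NonemptyCompacts.dist_eq, hΦ] at h
    exact h

/-- `L_ε` has a unique nonempty compact fixed point `A`, which attracts all nonempty compact
sets under iteration, in the Hausdorff metric. -/
theorem stmt2 {m : ℕ} (M : Matrix (Fin m) (Fin m) ℝ) (hdet : IsUnit M.det)
    (hspec : specLt1 M) (ε : ℝ) (hε : 0 < ε) :
    ∃ A : Set (EuclideanSpace ℝ (Fin m)), A.Nonempty ∧ IsCompact A ∧ Leps M ε A = A ∧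
      (∀ A' : Set (EuclideanSpace ℝ (Fin m)),
        A'.Nonempty → IsCompact A' → Leps M ε A' = A' → A' = A) ∧
      (∀ C : Set (EuclideanSpace ℝ (Fin m)), C.Nonempty → IsCompact C →
        Filter.Tendsto (fun i => Metric.hausdorffDist ((Leps M ε)^[i] C) A)
          Filter.atTop (nhds 0)) :=
  stmt2_general M hspec ε hε
end
end

section
/- If L ∈ GL(m, ℝ) has a real eigenvalue λ with |λ| > 1, then the set-valued map L_ε(C) := {L(x) + y : x ∈ C, ‖y‖ ≤ ε} has no fixed point among nonempty compact subsets of ℝ^m. -/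
/-!
Let `e` be a unit eigenvector, `L e = λ e`. If `u, w ∈ A` with `u - w = c e`, then
`L u + (s/2) e` and `L w - (s/2) e` lie in `L_ε(A) = A` for `|s| ≤ 2ε`, and their difference is
`(λ c + s) e`; choosing the sign of `s` gives `|λ c + s| = |λ| |c| + 2ε ≥ |c| + 2ε`. Iterating,
`A` contains points at distance at least `2nε` for every `n`, so it cannot be bounded.
-/

noncomputable section

lemma exists_abs_eq_and_abs_add_eq (a : ℝ) {b : ℝ} (hb : 0 ≤ b) :
    ∃ s, |s| = b ∧ |a + s| = |a| + b := by
  rcases le_total 0 a with ha | ha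
  · exact ⟨b, abs_of_nonneg hb, by rw [abs_of_nonneg ha, abs_of_nonneg (by linarith)]⟩
  · refine ⟨-b, by rw [abs_neg, abs_of_nonneg hb], ?_⟩
    rw [abs_of_nonpos ha, abs_of_nonpos (by linarith)]
    ring

lemma Module.End.HasEigenvalue.exists_norm_eq_one_apply_eq_smul {E : Type*}
    [NormedAddCommGroup E] [NormedSpace ℝ E] {f : Module.End ℝ E} {lam : ℝ}
    (hlam : f.HasEigenvalue lam) : ∃ e : E, ‖e‖ = 1 ∧ f e = lam • e := by
  obtain ⟨v, hv⟩ := hlam.exists_hasEigenvector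
  refine ⟨‖v‖⁻¹ • v, norm_smul_inv_norm hv.2, ?_⟩
  rw [map_smul, hv.apply_eq_smul, smul_comm]

section GrowingDifferences

variable {E : Type*} [NormedAddCommGroup E] [NormedSpace ℝ E] {f : E →ₗ[ℝ] E} {A : Set E}
  {ε lam : ℝ} {e : E}

lemma exists_sub_eq_smul_apply_add
    (hA : ∀ x ∈ A, ∀ y : E, ‖y‖ ≤ ε → f x + y ∈ A) (he : ‖e‖ = 1) (hfe : f e = lam • e)
    {u w : E} (hu : u ∈ A) (hw : w ∈ A) {c : ℝ} (huw : u - w = c • e) {s : ℝ}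
    (hs : |s| ≤ 2 * ε) : ∃ u' ∈ A, ∃ w' ∈ A, u' - w' = (lam * c + s) • e := by
  have hy : ‖(s / 2) • e‖ ≤ ε := by
    rw [norm_smul, he, mul_one, Real.norm_eq_abs, abs_div, abs_two]
    linarith
  refine ⟨f u + (s / 2) • e, hA u hu _ hy, f w + (-(s / 2)) • e,
    hA w hw _ (by rwa [norm_smul, norm_neg, ← norm_smul]), ?_⟩
  calc f u + (s / 2) • e - (f w + (-(s / 2)) • e) = f (u - w) + s • e := by
        rw [map_sub]; module
    _ = (lam * c + s) • e := by rw [huw, map_smul, hfe, smul_smul, ← add_smul, mul_comm]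

lemma exists_sub_eq_smul_of_le_abs
    (hA : ∀ x ∈ A, ∀ y : E, ‖y‖ ≤ ε → f x + y ∈ A) (hA₀ : A.Nonempty) (hε : 0 ≤ ε)
    (hlam : 1 ≤ |lam|) (he : ‖e‖ = 1) (hfe : f e = lam • e) (n : ℕ) :
    ∃ u ∈ A, ∃ w ∈ A, ∃ c : ℝ, n * (2 * ε) ≤ |c| ∧ u - w = c • e := by
  induction n with
  | zero =>
    obtain ⟨a, ha⟩ := hA₀
    exact ⟨a, ha, a, ha, 0, by simp, by simp⟩
  | succ n ih =>
    obtain ⟨u, hu, w, hw, c, hc, huw⟩ := ih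
    obtain ⟨s, hs, hlcs⟩ := exists_abs_eq_and_abs_add_eq (lam * c) (by positivity : 0 ≤ 2 * ε)
    obtain ⟨u', hu', w', hw', huw'⟩ :=
      exists_sub_eq_smul_apply_add hA he hfe hu hw huw hs.le
    refine ⟨u', hu', w', hw', lam * c + s, ?_, huw'⟩
    have : |c| ≤ |lam| * |c| := le_mul_of_one_le_left (abs_nonneg c) hlam
    rw [hlcs, abs_mul]
    push_cast
    linarith

theorem not_isBounded_of_forall_apply_add_mem
    (hA : ∀ x ∈ A, ∀ y : E, ‖y‖ ≤ ε → f x + y ∈ A) (hA₀ : A.Nonempty) (hε : 0 < ε)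
    (hlam : 1 ≤ |lam|) (he : ‖e‖ = 1) (hfe : f e = lam • e) : ¬ Bornology.IsBounded A := by
  intro hAb
  obtain ⟨n, hn⟩ := exists_nat_gt (Metric.diam A / (2 * ε))
  obtain ⟨u, hu, w, hw, c, hc, huw⟩ :=
    exists_sub_eq_smul_of_le_abs hA hA₀ hε.le hlam he hfe n
  have hdist : |c| ≤ Metric.diam A := by
    calc |c| = dist u w := by rw [dist_eq_norm, huw, norm_smul, he, mul_one, Real.norm_eq_abs]
      _ ≤ Metric.diam A := Metric.dist_le_diam_of_mem hAb hu hw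
  have := (div_lt_iff₀ (by positivity)).mp hn
  linarith

end GrowingDifferences

theorem stmt3_general {m : ℕ} (M : Matrix (Fin m) (Fin m) ℝ) (lam : ℝ)
    (hlam : Module.End.HasEigenvalue
      (Matrix.toEuclideanLin M : Module.End ℝ (EuclideanSpace ℝ (Fin m))) lam)
    (h1 : 1 < |lam|) (ε : ℝ) (hε : 0 < ε) :
    ¬ ∃ A : Set (EuclideanSpace ℝ (Fin m)), A.Nonempty ∧ IsCompact A ∧ Leps M ε A = A := by
  rintro ⟨A, hA₀, hAc, hfix⟩
  obtain ⟨e, he, hfe⟩ := hlam.exists_norm_eq_one_apply_eq_smul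
  have hA : ∀ x ∈ A, ∀ y, ‖y‖ ≤ ε → Matrix.toEuclideanLin M x + y ∈ A := by
    intro x hx y hy
    rw [← hfix]
    exact ⟨x, hx, y, hy, rfl⟩
  exact not_isBounded_of_forall_apply_add_mem hA hA₀ hε h1.le he hfe hAc.isBounded

/-- If `L` has a real eigenvalue `λ` with `|λ| > 1`, then `L_ε` has no nonempty compact
fixed point. -/
theorem stmt3 {m : ℕ} (M : Matrix (Fin m) (Fin m) ℝ) (hdet : IsUnit M.det) (lam : ℝ)
    (hlam : Module.End.HasEigenvalue
      (Matrix.toEuclideanLin M : Module.End ℝ (EuclideanSpace ℝ (Fin m))) lam)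
    (h1 : 1 < |lam|) (ε : ℝ) (hε : 0 < ε) :
    ¬ ∃ A : Set (EuclideanSpace ℝ (Fin m)), A.Nonempty ∧ IsCompact A ∧ Leps M ε A = A :=
  stmt3_general M lam hlam h1 ε hε
end
end

section
/- If L ∈ GL(m, ℝ) has a real eigenvalue λ with |λ| = 1, then the set-valued map L_ε(C) := {L(x) + y : x ∈ C, ‖y‖ ≤ ε} has no fixed point among nonempty compact subsets of ℝ^m. In particular, for x in the eigenspace of λ with x ≠ 0, the iterate L_ε^i({x}) contains a point at distance at least iε from the origin for every i ∈ ℕ. -/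
noncomputable section

/-!
If `λ` is an eigenvalue of `L`, it is also an eigenvalue of the adjoint `Lᵀ`, with a unit
eigenvector `w`; then `⟪L x, w⟫ = λ ⟪x, w⟫`, so when `|λ| ≥ 1` the functional `|⟪·, w⟫|` is not
decreased by `L`, and a perturbation `y = ±ε w` raises it by exactly `ε`. Along any orbit of `L_ε`
this functional therefore grows by `ε` per step: it is unbounded on every nonempty fixed point of
`L_ε`, which hence is not compact, and `L_ε^i({x})` contains a point `z` with `i ε ≤ |⟪z, w⟫| ≤ ‖z‖`.
-/

open RealInnerProductSpace

theorem Module.End.HasEigenvalue.adjoint {𝕜 E : Type*} [RCLike 𝕜] [NormedAddCommGroup E]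
    [InnerProductSpace 𝕜 E] [FiniteDimensional 𝕜 E] {T : E →ₗ[𝕜] E} {μ : 𝕜}
    (h : Module.End.HasEigenvalue T μ) :
    Module.End.HasEigenvalue (LinearMap.adjoint T) (starRingEnd 𝕜 μ) := by
  rw [Module.End.hasEigenvalue_iff_mem_spectrum] at h ⊢
  rw [← LinearMap.star_eq_adjoint, spectrum.map_star]
  simpa using h

theorem Module.End.HasEigenvalue.exists_norm_eq_one_inner_map_eq {E : Type*}
    [NormedAddCommGroup E] [InnerProductSpace ℝ E] [FiniteDimensional ℝ E] {T : E →ₗ[ℝ] E}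
    {μ : ℝ} (h : Module.End.HasEigenvalue T μ) : ∃ w : E, ‖w‖ = 1 ∧ ∀ a, ⟪T a, w⟫ = μ * ⟪a, w⟫ := by
  obtain ⟨v, hv⟩ := h.adjoint.exists_hasEigenvector
  have hv0 : ‖v‖ ≠ 0 := norm_ne_zero_iff.2 hv.2
  refine ⟨‖v‖⁻¹ • v, by rw [norm_smul, norm_inv, norm_norm, inv_mul_cancel₀ hv0], fun a => ?_⟩
  rw [real_inner_smul_right, real_inner_smul_right, ← LinearMap.adjoint_inner_right,
    hv.apply_eq_smul, starRingEnd_apply, star_trivial, real_inner_smul_right]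
  ring

theorem exists_abs_add_mul_eq (t : ℝ) {ε : ℝ} (hε : 0 ≤ ε) :
    ∃ s : ℝ, |s| = 1 ∧ |t + s * ε| = |t| + ε := by
  rcases le_total 0 t with ht | ht
  · exact ⟨1, abs_one, by rw [one_mul, abs_of_nonneg ht, abs_of_nonneg (by linarith)]⟩
  · refine ⟨-1, by simp, ?_⟩
    rw [abs_of_nonpos ht, abs_of_nonpos (by linarith)]
    ring

theorem exists_norm_le_abs_inner_add_le {E : Type*} [NormedAddCommGroup E]
    [InnerProductSpace ℝ E] {T : E →ₗ[ℝ] E} {μ : ℝ} (hμ : 1 ≤ |μ|) {w : E} (hw : ‖w‖ = 1)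
    (hTw : ∀ a, ⟪T a, w⟫ = μ * ⟪a, w⟫) {ε : ℝ} (hε : 0 ≤ ε) (a : E) :
    ∃ y : E, ‖y‖ ≤ ε ∧ |⟪a, w⟫| + ε ≤ |⟪T a + y, w⟫| := by
  obtain ⟨s, hs, hsε⟩ := exists_abs_add_mul_eq ⟪T a, w⟫ hε
  refine ⟨(s * ε) • w, by rw [norm_smul, hw, mul_one, Real.norm_eq_abs, abs_mul, hs, one_mul,
    abs_of_nonneg hε], ?_⟩
  have hgrow : |⟪a, w⟫| ≤ |⟪T a, w⟫| := by
    rw [hTw, abs_mul]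
    exact le_mul_of_one_le_left (abs_nonneg _) hμ
  rw [inner_add_left, real_inner_smul_left, real_inner_self_eq_norm_sq, hw, one_pow, mul_one, hsε]
  linarith

section Iterate

variable {α : Type*} {F : Set α → Set α} {f : α → ℝ} {δ : ℝ}

theorem exists_mem_iterate_add_le (hF : ∀ C, ∀ a ∈ C, ∃ z ∈ F C, f a + δ ≤ f z) {C : Set α}
    {a : α} (ha : a ∈ C) (i : ℕ) : ∃ z ∈ F^[i] C, f a + i * δ ≤ f z := by
  induction i with
  | zero => exact ⟨a, ha, by simp⟩
  | succ n ih =>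
    obtain ⟨z, hz, hle⟩ := ih
    obtain ⟨z', hz', hle'⟩ := hF _ z hz
    refine ⟨z', by rwa [Function.iterate_succ_apply'], ?_⟩
    push_cast
    linarith

theorem not_bddAbove_image_of_map_eq_self (hF : ∀ C, ∀ a ∈ C, ∃ z ∈ F C, f a + δ ≤ f z)
    (hδ : 0 < δ) {A : Set α} (hA : F A = A) (hne : A.Nonempty) : ¬ BddAbove (f '' A) := by
  rintro ⟨R, hR⟩
  obtain ⟨a, ha⟩ := hne
  obtain ⟨i, hi⟩ := exists_nat_gt ((R - f a) / δ)
  obtain ⟨z, hz, hle⟩ := exists_mem_iterate_add_le hF ha i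
  rw [Function.iterate_fixed hA] at hz
  have hzR : f z ≤ R := hR ⟨z, hz, rfl⟩
  rw [div_lt_iff₀ hδ] at hi
  linarith

end Iterate

theorem stmt4_general {m : ℕ} (M : Matrix (Fin m) (Fin m) ℝ) (lam : ℝ)
    (hlam : Module.End.HasEigenvalue
      (Matrix.toEuclideanLin M : Module.End ℝ (EuclideanSpace ℝ (Fin m))) lam)
    (h1 : |lam| = 1) (ε : ℝ) (hε : 0 < ε) :
    (¬ ∃ A : Set (EuclideanSpace ℝ (Fin m)), A.Nonempty ∧ IsCompact A ∧ Leps M ε A = A) ∧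
    (∀ x : EuclideanSpace ℝ (Fin m), x ≠ 0 → Matrix.toEuclideanLin M x = lam • x →
      ∀ i : ℕ, ∃ z ∈ (Leps M ε)^[i] {x}, (i : ℝ) * ε ≤ ‖z‖) := by
  obtain ⟨w, hw, hMw⟩ := hlam.exists_norm_eq_one_inner_map_eq
  have step : ∀ C, ∀ a ∈ C, ∃ z ∈ Leps M ε C, |⟪a, w⟫| + ε ≤ |⟪z, w⟫| := fun C a ha => by
    obtain ⟨y, hy, hle⟩ := exists_norm_le_abs_inner_add_le h1.ge hw hMw hε.le a
    exact ⟨_, ⟨a, ha, y, hy, rfl⟩, hle⟩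
  refine ⟨fun ⟨A, hne, hA, hfix⟩ => ?_, fun x _ _ i => ?_⟩
  · exact not_bddAbove_image_of_map_eq_self step hε hfix hne
      (hA.bddAbove_image (by fun_prop))
  · obtain ⟨z, hz, hle⟩ := exists_mem_iterate_add_le step (Set.mem_singleton x) i
    refine ⟨z, hz, ?_⟩
    calc (i : ℝ) * ε ≤ |⟪x, w⟫| + i * ε := le_add_of_nonneg_left (abs_nonneg _)
      _ ≤ |⟪z, w⟫| := hle
      _ ≤ ‖z‖ * ‖w‖ := abs_real_inner_le_norm z w
      _ = ‖z‖ := by rw [hw, mul_one]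

/-- If `L` has a real eigenvalue `λ` with `|λ| = 1`, then `L_ε` has no nonempty compact fixed
point; moreover, for a nonzero eigenvector `x` of `λ`, the `i`-th iterate `L_ε^i({x})`
contains a point at distance at least `i·ε` from the origin. -/
theorem stmt4 {m : ℕ} (M : Matrix (Fin m) (Fin m) ℝ) (hdet : IsUnit M.det) (lam : ℝ)
    (hlam : Module.End.HasEigenvalue
      (Matrix.toEuclideanLin M : Module.End ℝ (EuclideanSpace ℝ (Fin m))) lam)
    (h1 : |lam| = 1) (ε : ℝ) (hε : 0 < ε) :
    (¬ ∃ A : Set (EuclideanSpace ℝ (Fin m)), A.Nonempty ∧ IsCompact A ∧ Leps M ε A = A) ∧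
    (∀ x : EuclideanSpace ℝ (Fin m), x ≠ 0 → Matrix.toEuclideanLin M x = lam • x →
      ∀ i : ℕ, ∃ z ∈ (Leps M ε)^[i] {x}, (i : ℝ) * ε ≤ ‖z‖) :=
  stmt4_general M lam hlam h1 ε hε
end
end

section
/- Let L ∈ GL(m, ℝ), ε > 0, and let A be a nonempty compact set with {L(x) + y : x ∈ A, ‖y‖ ≤ ε} = A. Then for every boundary point x ∈ ∂A there exists y ∈ L(A) with ‖x − y‖ = ε and the closed ball of radius ε about y contained in A. -/
/-! A fixed point `A` of `L_ε` is the union of the closed `ε`-balls about the points of `L(A)`.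
A boundary point of `A` lies in one of these balls but not in its open interior, which would
be inside `interior A`; so it lies on the sphere. -/

noncomputable section

theorem Leps_eq_biUnion_closedBall {m : ℕ} (M : Matrix (Fin m) (Fin m) ℝ) (ε : ℝ)
    (C : Set (EuclideanSpace ℝ (Fin m))) :
    Leps M ε C = ⋃ x ∈ C, Metric.closedBall (Matrix.toEuclideanLin M x) ε := by
  ext z
  simp only [Leps, Set.mem_ofPred_eq, Set.mem_iUnion, Metric.mem_closedBall, dist_eq_norm,
    exists_prop]
  refine exists_congr fun x => and_congr_right fun _ => ⟨?_, fun h => ⟨_, h, by abel⟩⟩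
  rintro ⟨y, hy, rfl⟩
  simpa using hy

theorem stmt9_general {m : ℕ} (M : Matrix (Fin m) (Fin m) ℝ)
    (ε : ℝ) (A : Set (EuclideanSpace ℝ (Fin m)))
    (hAcomp : IsCompact A) (hAfix : Leps M ε A = A) :
    ∀ x ∈ frontier A, ∃ y ∈ (fun v => Matrix.toEuclideanLin M v) '' A,
      ‖x - y‖ = ε ∧ Metric.closedBall y ε ⊆ A := by
  rw [Leps_eq_biUnion_closedBall] at hAfix
  have hball {a} (ha : a ∈ A) : Metric.closedBall (Matrix.toEuclideanLin M a) ε ⊆ A :=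
    hAfix ▸ Set.subset_biUnion_of_mem (u := fun a => Metric.closedBall _ ε) ha
  intro x hx
  have hxA : x ∈ A := hAcomp.isClosed.frontier_subset hx
  rw [← hAfix] at hxA
  obtain ⟨a, haA, hxa⟩ := Set.mem_iUnion₂.mp hxA
  refine ⟨_, ⟨a, haA, rfl⟩, ?_, hball haA⟩
  rw [Metric.mem_closedBall, dist_eq_norm] at hxa
  refine hxa.antisymm (not_lt.mp fun hlt => hx.2 ?_)
  exact interior_maximal (Metric.ball_subset_closedBall.trans (hball haA)) Metric.isOpen_ball
    (by rwa [Metric.mem_ball, dist_eq_norm])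

/-- For a fixed point `A` of `L_ε`, every boundary point `x ∈ ∂A` is at distance exactly `ε`
from some `y ∈ L(A)` whose closed `ε`-ball is contained in `A`. -/
theorem stmt9 {m : ℕ} (M : Matrix (Fin m) (Fin m) ℝ) (hdet : IsUnit M.det)
    (ε : ℝ) (hε : 0 < ε) (A : Set (EuclideanSpace ℝ (Fin m)))
    (hAne : A.Nonempty) (hAcomp : IsCompact A) (hAfix : Leps M ε A = A) :
    ∀ x ∈ frontier A, ∃ y ∈ (fun v => Matrix.toEuclideanLin M v) '' A,
      ‖x - y‖ = ε ∧ Metric.closedBall y ε ⊆ A :=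
  stmt9_general M ε A hAcomp hAfix
end
end

section
/- Let A ⊆ ℝ^m be a compact convex set such that for every boundary point x ∈ ∂A there exists a closed ball of radius ε > 0 contained in A whose boundary sphere contains x. Then at every boundary point of A the supporting hyperplane is unique; equivalently, ∂A is a C^1 hypersurface. -/
/-!
The ball `closedBall y ε ⊆ A` touching `∂A` at `x` pins the normal: a supporting unit normal `n`
at `x` must also support the ball, and testing this at the ball's point `y + ε • n` forces
`⟪x - y, n⟫ ≥ ε = ‖x - y‖`, the equality case of Cauchy–Schwarz, so `n = ε⁻¹ • (x - y)`.
Existence of a supporting normal is the usual Hahn–Banach separation of `x` from the nonempty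
interior of `A`.
-/

open scoped RealInnerProductSpace

section

variable {E : Type*} [NormedAddCommGroup E] [InnerProductSpace ℝ E]

/-- The hyperplane through `x` orthogonal to `n` supports `A`, with `n` pointing outward. -/
def IsUnitNormal (A : Set E) (x n : E) : Prop :=
  ‖n‖ = 1 ∧ ∀ z ∈ A, ⟪z - x, n⟫ ≤ 0

theorem IsUnitNormal.eq_of_closedBall_subset {A : Set E} {x y n : E} {ε : ℝ}
    (hn : IsUnitNormal A x n) (hε : 0 < ε) (hx : x ∈ Metric.sphere y ε)
    (hA : Metric.closedBall y ε ⊆ A) : n = ε⁻¹ • (x - y) := by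
  obtain ⟨hn1, hsupp⟩ := hn
  have hxy : ‖x - y‖ = ε := by rwa [← dist_eq_norm]
  have hz : y + ε • n ∈ A := hA <| by
    rw [Metric.mem_closedBall, dist_eq_norm, add_sub_cancel_left, norm_smul, hn1,
      Real.norm_of_nonneg hε.le, mul_one]
  have hle : ε ≤ ⟪x - y, n⟫ := by
    have h := hsupp _ hz
    rw [show y + ε • n - x = ε • n - (x - y) by abel, inner_sub_left, real_inner_smul_left,
      real_inner_self_eq_norm_sq, hn1] at h
    linarith
  have hcs : ⟪x - y, n⟫ = ‖x - y‖ * ‖n‖ :=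
    le_antisymm (real_inner_le_norm _ _) (by rwa [hxy, hn1, mul_one])
  have hsmul := inner_eq_norm_mul_iff_real.mp hcs
  rw [hn1, hxy, one_smul] at hsmul
  rw [hsmul, smul_smul, inv_mul_cancel₀ hε.ne', one_smul]

theorem exists_isUnitNormal_of_notMem_interior [CompleteSpace E] {A : Set E} {x : E}
    (hA : Convex ℝ A) (hint : (interior A).Nonempty) (hx : x ∉ interior A) :
    ∃ n, IsUnitNormal A x n := by
  obtain ⟨f, u, hf0, hfA, hfx⟩ := geometric_hahn_banach_of_nonempty_interior hA
    (convex_singleton x) (Set.disjoint_singleton_right.2 hx) hint (Set.singleton_nonempty x)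
  set v := (InnerProductSpace.toDual ℝ E).symm f
  have hv : ∀ z, ⟪v, z⟫ = f z := fun z => InnerProductSpace.toDual_symm_apply
  have hv0 : v ≠ 0 := by simpa [v] using hf0
  refine ⟨‖v‖⁻¹ • v, ?_, fun z hz => ?_⟩
  · exact norm_smul_inv_norm hv0
  have hzx : ⟪z - x, v⟫ ≤ 0 := by
    rw [real_inner_comm, inner_sub_right, hv, hv]
    linarith [hfA z hz, hfx x rfl]
  rw [real_inner_smul_right]
  exact mul_nonpos_of_nonneg_of_nonpos (inv_nonneg.2 (norm_nonneg v)) hzx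

end

theorem stmt10_general {m : ℕ} (A : Set (EuclideanSpace ℝ (Fin m)))
    (hconv : Convex ℝ A) (ε : ℝ) (hε : 0 < ε)
    (hball : ∀ x ∈ frontier A, ∃ y : EuclideanSpace ℝ (Fin m),
      x ∈ Metric.sphere y ε ∧ Metric.closedBall y ε ⊆ A) :
    ∀ x ∈ frontier A, ∃! n : EuclideanSpace ℝ (Fin m),
      ‖n‖ = 1 ∧ ∀ z ∈ A, ⟪z - x, n⟫ ≤ 0 := by
  intro x hx
  obtain ⟨y, hxy, hyA⟩ := hball x hx
  have hint : (interior A).Nonempty :=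
    ⟨y, interior_mono hyA (mem_interior_iff_mem_nhds.2 (Metric.closedBall_mem_nhds y hε))⟩
  exact existsUnique_of_exists_of_unique (exists_isUnitNormal_of_notMem_interior hconv hint hx.2)
    fun n n' hn hn' => (IsUnitNormal.eq_of_closedBall_subset hn hε hxy hyA).trans
      (IsUnitNormal.eq_of_closedBall_subset hn' hε hxy hyA).symm

/-- If every boundary point of the compact convex set `A` lies on the boundary sphere of a
closed `ε`-ball contained in `A`, then the supporting hyperplane (equivalently, the outward
unit normal) at every boundary point is unique. -/
theorem stmt10 {m : ℕ} (A : Set (EuclideanSpace ℝ (Fin m)))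
    (hAcomp : IsCompact A) (hconv : Convex ℝ A) (ε : ℝ) (hε : 0 < ε)
    (hball : ∀ x ∈ frontier A, ∃ y : EuclideanSpace ℝ (Fin m),
      x ∈ Metric.sphere y ε ∧ Metric.closedBall y ε ⊆ A) :
    ∀ x ∈ frontier A, ∃! n : EuclideanSpace ℝ (Fin m),
      ‖n‖ = 1 ∧ ∀ z ∈ A, ⟪z - x, n⟫ ≤ 0 :=
  stmt10_general A hconv ε hε hball
end

section
/- Let L ∈ GL(m, ℝ) have all eigenvalues of modulus less than 1, ε > 0, and let A be the unique compact fixed point of L_ε(C) := {L(x) + y : x ∈ C, ‖y‖ ≤ ε}. Then at every boundary point of A the supporting hyperplane of A is unique. -/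
open scoped RealInnerProductSpace

noncomputable section

/-! Iterating `A = L(A) + B̄(0, ε)` gives `A = Lⁿ(A) + Sₙ` with `Sₙ` convex, and `‖Lⁿ‖ → 0` by
Gelfand's formula, so every convex combination of points of `A` lies within `‖Lⁿ‖ · diam A`
of `A`: the compact set `A` is convex. A boundary point `x` has the form `L b + y` with
`‖y‖ = ε`, and `A` contains the ball `B̄(L b, ε)`, whose only outer unit normal at `x` is
`y / ε`; a supporting hyperplane exists by Hahn–Banach since `A` has interior. -/

open Filter Topology Set Metric Pointwise

theorem tendsto_pow_atTop_nhds_zero_of_spectralRadius_lt_one {A : Type*} [NormedRing A]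
    [NormedAlgebra ℂ A] [CompleteSpace A] {a : A} (h : spectralRadius ℂ a < 1) :
    Tendsto (a ^ ·) atTop (𝓝 0) := by
  obtain ⟨r, hρr, hr1⟩ := ENNReal.lt_iff_exists_nnreal_btwn.mp h
  have hle : ∀ᶠ n : ℕ in atTop, ‖a ^ n‖ ≤ (r : ℝ) ^ n := by
    filter_upwards [(spectrum.pow_nnnorm_pow_one_div_tendsto_nhds_spectralRadius a
      ).eventually_lt_const hρr, eventually_gt_atTop 0] with n hn hn0
    rw [one_div, ENNReal.rpow_inv_lt_iff (by positivity), ENNReal.rpow_natCast] at hn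
    exact_mod_cast hn.le
  exact squeeze_zero_norm' hle
    (tendsto_pow_atTop_nhds_zero_of_lt_one r.coe_nonneg (mod_cast hr1))

namespace specLt1

variable {m : ℕ} {M : Matrix (Fin m) (Fin m) ℝ}

theorem spectralRadius_lt_one (hM : specLt1 M) :
    spectralRadius ℂ (Matrix.toEuclideanCLM (𝕜 := ℂ) (M.map Complex.ofReal)) < 1 := by
  set a := Matrix.toEuclideanCLM (𝕜 := ℂ) (M.map Complex.ofReal)
  rw [specLt1, ← AlgEquiv.spectrum_eq (Matrix.toEuclideanCLM (n := Fin m) (𝕜 := ℂ)).toAlgEquiv]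
    at hM
  rcases (spectrum ℂ a).eq_empty_or_nonempty with h | h
  · simp [spectralRadius, h]
  · exact_mod_cast spectrum.spectralRadius_lt_of_forall_lt_of_nonempty h (r := 1)
      fun k hk => mod_cast hM k hk

theorem tendsto_pow_s11 (hM : specLt1 M) : Tendsto (M ^ ·) atTop (𝓝 0) := by
  have hcont : Continuous (Matrix.toEuclideanCLM (n := Fin m) (𝕜 := ℂ)).symm :=
    LinearMap.continuous_of_finiteDimensional
      (Matrix.toEuclideanCLM (n := Fin m) (𝕜 := ℂ)).symm.toAlgEquiv.toLinearMap
  have hre : Continuous fun N : Matrix (Fin m) (Fin m) ℂ => N.map Complex.re :=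
    continuous_id.matrix_map Complex.continuous_re
  have hc : Tendsto ((M.map Complex.ofReal) ^ ·) atTop (𝓝 0) := by
    simpa [Function.comp_def] using (hcont.tendsto 0).comp
      (tendsto_pow_atTop_nhds_zero_of_spectralRadius_lt_one hM.spectralRadius_lt_one)
  have hpow (n : ℕ) : M ^ n = ((M.map Complex.ofReal) ^ n).map Complex.re := by
    have h : (M ^ n).map Complex.ofReal = M.map Complex.ofReal ^ n :=
      Matrix.map_pow M Complex.ofRealHom n
    rw [← h]
    ext
    simp
  simpa [Function.comp_def, ← hpow] using (hre.tendsto 0).comp hc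

theorem tendsto_toEuclideanCLM_pow (hM : specLt1 M) :
    Tendsto (Matrix.toEuclideanCLM (𝕜 := ℝ) M ^ ·) atTop (𝓝 0) := by
  have hcont : Continuous (Matrix.toEuclideanCLM (n := Fin m) (𝕜 := ℝ)) :=
    LinearMap.continuous_of_finiteDimensional
      (Matrix.toEuclideanCLM (n := Fin m) (𝕜 := ℝ)).toAlgEquiv.toLinearMap
  simpa [Function.comp_def] using (hcont.tendsto 0).comp hM.tendsto_pow_s11

end specLt1

section SelfSimilar

variable {E : Type*} [NormedAddCommGroup E] [NormedSpace ℝ E] {T : E →L[ℝ] E} {A K : Set E}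

theorem exists_convex_eq_image_pow_add (hK : Convex ℝ K) (hA : A = T '' A + K) (n : ℕ) :
    ∃ S : Set E, Convex ℝ S ∧ A = (T ^ n) '' A + S := by
  induction n with
  | zero => exact ⟨{0}, convex_singleton 0, by simp⟩
  | succ n ih =>
    obtain ⟨S, hS, hAS⟩ := ih
    refine ⟨(T ^ n) '' K + S, (hK.linear_image (T ^ n).toLinearMap).add hS, ?_⟩
    calc A = (T ^ n) '' (T '' A + K) + S := by rwa [← hA]
      _ = (T ^ (n + 1)) '' A + ((T ^ n) '' K + S) := by
        rw [image_add, image_image, add_assoc, pow_succ]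
        rfl

theorem convex_of_eq_image_add (hAc : IsCompact A) (hK : Convex ℝ K) (hA : A = T '' A + K)
    (hT : Tendsto (T ^ ·) atTop (𝓝 0)) : Convex ℝ A := by
  intro a ha b hb s t hs ht hst
  have hclose (n : ℕ) : ∃ p ∈ A, dist p (s • a + t • b) ≤ ‖T ^ n‖ * diam A := by
    obtain ⟨S, hS, hAS⟩ := exists_convex_eq_image_pow_add hK hA n
    rw [hAS] at ha hb
    obtain ⟨_, ⟨a', ha', rfl⟩, c, hc, rfl⟩ := ha
    obtain ⟨_, ⟨b', hb', rfl⟩, d, hd, rfl⟩ := hb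
    refine ⟨(T ^ n) a' + (s • c + t • d),
      hAS ▸ add_mem_add (mem_image_of_mem _ ha') (hS hc hd hs ht hst), ?_⟩
    have ht1 : t ≤ 1 := by linarith
    calc dist ((T ^ n) a' + (s • c + t • d)) (s • ((T ^ n) a' + c) + t • ((T ^ n) b' + d))
        = ‖(T ^ n) (t • (a' - b'))‖ := by
          rw [dist_eq_norm, map_smul, map_sub, show s = 1 - t by linarith]
          congr 1
          module
      _ ≤ ‖T ^ n‖ * ‖t • (a' - b')‖ := (T ^ n).le_opNorm _
      _ ≤ ‖T ^ n‖ * diam A := by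
          gcongr
          rw [norm_smul, Real.norm_of_nonneg ht, ← dist_eq_norm]
          exact (mul_le_of_le_one_left dist_nonneg ht1).trans
            (dist_le_diam_of_mem hAc.isBounded ha' hb')
  choose p hpA hp using hclose
  rw [← hAc.isClosed.closure_eq]
  refine mem_closure_of_tendsto (b := atTop) (tendsto_iff_dist_tendsto_zero.mpr ?_)
    (.of_forall hpA)
  refine squeeze_zero (fun _ => dist_nonneg) hp ?_
  simpa using hT.norm.mul_const (diam A)

end SelfSimilar

section UnitNormal

variable {E : Type*} [NormedAddCommGroup E] [InnerProductSpace ℝ E]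

def IsOuterUnitNormal (A : Set E) (x n : E) : Prop :=
  ‖n‖ = 1 ∧ ∀ z ∈ A, ⟪z - x, n⟫ ≤ 0

variable {A B : Set E} {x n : E}

theorem IsOuterUnitNormal.mono (h : IsOuterUnitNormal A x n) (hBA : B ⊆ A) :
    IsOuterUnitNormal B x n :=
  ⟨h.1, fun z hz => h.2 z (hBA hz)⟩

theorem IsOuterUnitNormal.eq_of_closedBall {c : E} {ε : ℝ}
    (h : IsOuterUnitNormal (closedBall c ε) x n) (hε : 0 < ε) (hx : ‖x - c‖ = ε) :
    n = ε⁻¹ • (x - c) := by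
  obtain ⟨hn, hsupp⟩ := h
  have hmem : c + ε • n ∈ closedBall c ε := by
    simp [norm_smul, abs_of_pos hε, hn]
  have hle := hsupp _ hmem
  rw [show c + ε • n - x = ε • n - (x - c) by abel, inner_sub_left, real_inner_smul_left,
    real_inner_self_eq_norm_mul_norm, hn] at hle
  have hcs : ⟪x - c, n⟫ = ‖x - c‖ * ‖n‖ :=
    le_antisymm (real_inner_le_norm _ _) (by rw [hx, hn]; linarith)
  have hpar := inner_eq_norm_mul_iff_real.mp hcs
  rw [hn, hx, one_smul] at hpar
  rw [hpar, smul_smul, inv_mul_cancel₀ hε.ne', one_smul]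

theorem Convex.exists_isOuterUnitNormal [CompleteSpace E] (hA : Convex ℝ A)
    (hint : (interior A).Nonempty) (hx : x ∉ interior A) : ∃ n, IsOuterUnitNormal A x n := by
  obtain ⟨f, hf⟩ := geometric_hahn_banach_open_point hA.interior isOpen_interior hx
  have hfA : ∀ z ∈ A, f z ≤ f x := by
    intro z hz
    have hz' : z ∈ closure (interior A) := by
      rw [hA.closure_interior_eq_closure_of_nonempty_interior hint]
      exact subset_closure hz
    exact closure_minimal (fun y hy => (hf y hy).le)
      (isClosed_le f.continuous continuous_const) hz'
  set v := (InnerProductSpace.toDual ℝ E).symm f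
  have hv (u : E) : ⟪v, u⟫ = f u := InnerProductSpace.toDual_symm_apply
  have hv0 : v ≠ 0 := by
    rintro h
    obtain ⟨w, hw⟩ := hint
    simpa [← hv, h] using hf w hw
  refine ⟨‖v‖⁻¹ • v, norm_smul_inv_norm hv0, fun z hz => ?_⟩
  rw [real_inner_smul_right, real_inner_comm, inner_sub_right, hv, hv]
  exact mul_nonpos_of_nonneg_of_nonpos (by positivity) (sub_nonpos.mpr (hfA z hz))

end UnitNormal

section Attractor

variable {E : Type*} [SeminormedAddCommGroup E] {f : E → E} {A : Set E} {ε : ℝ}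

theorem closedBall_subset_of_eq_image_add (hA : A = f '' A + closedBall 0 ε) {b : E}
    (hb : b ∈ A) : closedBall (f b) ε ⊆ A := by
  intro z hz
  rw [hA]
  exact ⟨f b, mem_image_of_mem f hb, z - f b, by simpa [dist_eq_norm] using hz,
    add_sub_cancel _ _⟩

theorem exists_norm_sub_eq_of_notMem_interior (hA : A = f '' A + closedBall 0 ε) {x : E}
    (hx : x ∈ A) (hxi : x ∉ interior A) : ∃ b ∈ A, ‖x - f b‖ = ε := by
  obtain ⟨_, ⟨b, hb, rfl⟩, y, hy, rfl⟩ : x ∈ f '' A + closedBall 0 ε := hA ▸ hx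
  rw [mem_closedBall_zero_iff] at hy
  refine ⟨b, hb, ?_⟩
  rw [add_sub_cancel_left]
  by_contra hne
  have hlt : 0 < ε - ‖y‖ := sub_pos.mpr (lt_of_le_of_ne hy hne)
  refine hxi (mem_interior.mpr ⟨ball (f b + y) (ε - ‖y‖), ?_, isOpen_ball, mem_ball_self hlt⟩)
  refine ball_subset_closedBall.trans ((closedBall_subset_closedBall' ?_).trans
    (closedBall_subset_of_eq_image_add hA hb))
  simp [dist_eq_norm]

end Attractor

theorem Leps_eq_image_add {m : ℕ} (M : Matrix (Fin m) (Fin m) ℝ) (ε : ℝ)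
    (C : Set (EuclideanSpace ℝ (Fin m))) :
    Leps M ε C = Matrix.toEuclideanCLM (𝕜 := ℝ) M '' C + closedBall 0 ε := by
  ext z
  constructor
  · rintro ⟨x, hx, y, hy, rfl⟩
    exact ⟨_, ⟨x, hx, rfl⟩, y, mem_closedBall_zero_iff.mpr hy, rfl⟩
  · rintro ⟨_, ⟨x, hx, rfl⟩, y, hy, rfl⟩
    exact ⟨x, hx, y, mem_closedBall_zero_iff.mp hy, rfl⟩

theorem stmt11_general {m : ℕ} (M : Matrix (Fin m) (Fin m) ℝ)
    (hspec : specLt1 M) (ε : ℝ) (hε : 0 < ε) (A : Set (EuclideanSpace ℝ (Fin m)))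
    (hAcomp : IsCompact A) (hAfix : Leps M ε A = A) :
    ∀ x ∈ frontier A, ∃! n : EuclideanSpace ℝ (Fin m),
      ‖n‖ = 1 ∧ ∀ z ∈ A, ⟪z - x, n⟫ ≤ 0 := by
  set T := Matrix.toEuclideanCLM (𝕜 := ℝ) M
  have hA : A = T '' A + closedBall 0 ε := by rw [← Leps_eq_image_add, hAfix]
  have hconv : Convex ℝ A :=
    convex_of_eq_image_add hAcomp (convex_closedBall 0 ε) hA hspec.tendsto_toEuclideanCLM_pow
  intro x hx
  obtain ⟨b, hb, hxb⟩ :=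
    exists_norm_sub_eq_of_notMem_interior hA (hAcomp.isClosed.frontier_subset hx) hx.2
  have hball : closedBall (T b) ε ⊆ A := closedBall_subset_of_eq_image_add hA hb
  have hint : (interior A).Nonempty :=
    ⟨T b, mem_interior.mpr ⟨ball (T b) ε, ball_subset_closedBall.trans hball, isOpen_ball,
      mem_ball_self hε⟩⟩
  obtain ⟨n, hn⟩ := hconv.exists_isOuterUnitNormal hint hx.2
  refine ⟨n, hn, fun n' hn' => ?_⟩
  rw [(IsOuterUnitNormal.mono hn' hball).eq_of_closedBall hε hxb,
    (hn.mono hball).eq_of_closedBall hε hxb]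

/-- At every boundary point of the unique compact fixed point `A` of `L_ε`, the supporting
hyperplane (equivalently, the outward unit normal) is unique. -/
theorem stmt11 {m : ℕ} (M : Matrix (Fin m) (Fin m) ℝ) (hdet : IsUnit M.det)
    (hspec : specLt1 M) (ε : ℝ) (hε : 0 < ε) (A : Set (EuclideanSpace ℝ (Fin m)))
    (hAne : A.Nonempty) (hAcomp : IsCompact A) (hAfix : Leps M ε A = A) :
    ∀ x ∈ frontier A, ∃! n : EuclideanSpace ℝ (Fin m),
      ‖n‖ = 1 ∧ ∀ z ∈ A, ⟪z - x, n⟫ ≤ 0 :=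
  stmt11_general M hspec ε hε A hAcomp hAfix
end
end
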